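/- Let Q be a smooth manifold, ϑ a closed one-form on Q, and θ := π_Q*ϑ its pullback to T*Q by the cotangent projection π_Q. Define Ω_θ := −d_θΘ_Q = −dΘ_Q + θ∧Θ_Q, where Θ_Q is the tautological one-form. Then Ω_θ is a nondegenerate two-form and dΩ_θ = θ∧Ω_θ, i.e. (T*Q, Ω_θ, θ) is a locally conformal symplectic manifold with Lee form θ. -/

import Mathlib

noncomputable section

open scoped BigOperators

variable {E F : Type*} [NormedAddCommGroup E] [NormedSpace ℝ E]
  [NormedAddCommGroup F] [NormedSpace ℝ F]

/-- The exterior derivative of a smooth function, as a one-form. -/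
def extDer0 (f : E → ℝ) : E → E → ℝ := fun x v => fderiv ℝ f x v

/-- The exterior derivative of a one-form. -/
def extDer1 (α : E → E → ℝ) : E → E → E → ℝ := fun x u v =>
  fderiv ℝ (fun y => α y v) x u - fderiv ℝ (fun y => α y u) x v

/-- The exterior derivative of a two-form. -/
def extDer2 (ω : E → E → E → ℝ) : E → E → E → E → ℝ := fun x u v w =>
  fderiv ℝ (fun y => ω y v w) x u - fderiv ℝ (fun y => ω y u w) x v +
    fderiv ℝ (fun y => ω y u v) x w

/-- Wedge product of two one-forms. -/
def wedge11 (α β : E → E → ℝ) : E → E → E → ℝ := fun x u v =>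
  α x u * β x v - α x v * β x u

/-- Wedge product of a one-form with a two-form. -/
def wedge12 (θ : E → E → ℝ) (ω : E → E → E → ℝ) : E → E → E → E → ℝ := fun x u v w =>
  θ x u * ω x v w - θ x v * ω x u w + θ x w * ω x u v

/-- Pullback of a one-form along a smooth map. -/
def pb1 (φ : E → F) (α : F → F → ℝ) : E → E → ℝ := fun x v => α (φ x) (fderiv ℝ φ x v)

/-- Pullback of a two-form along a smooth map. -/
def pb2 (φ : E → F) (ω : F → F → F → ℝ) : E → E → E → ℝ := fun x u v =>
  ω (φ x) (fderiv ℝ φ x u) (fderiv ℝ φ x v)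

/-- Model for the cotangent bundle `T*Q` of the manifold `Q = E`. -/
abbrev Cot (E : Type*) [NormedAddCommGroup E] [NormedSpace ℝ E] := E × (E →L[ℝ] ℝ)

/-- The tautological (canonical) one-form `Θ_Q` on `T*Q`. -/
def taut : Cot E → Cot E → ℝ := fun z v => z.2 v.1

/-- The canonical symplectic two-form `Ω_Q = -dΘ_Q` on `T*Q`. -/
def canSymp : Cot E → Cot E → Cot E → ℝ := fun z u v => -(extDer1 taut z u v)
/-- The almost symplectic two-form `Ω_θ = -dΘ_Q + (π_Q*ϑ) ∧ Θ_Q` on `T*Q`,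
for the Lee form `θ = π_Q*ϑ`. -/
def lcsForm (ϑ : E → E →L[ℝ] ℝ) : Cot E → Cot E → Cot E → ℝ := fun z u v =>
  canSymp z u v + (ϑ z.1 u.1 * taut z v - ϑ z.1 v.1 * taut z u)

/-!
In the coordinates `z = (x, p)` of `T*Q`, `Ω_θ(u, v) = v.2 u.1 - u.2 v.1 + ϑ(u.1) p(v.1) - ϑ(v.1) p(u.1)`.
Pairing `u` with `(0, ξ)` gives `ξ(u.1)`, so `u.1 = 0` by Hahn–Banach, and then pairing with `(w, 0)`
gives `-u.2 w`, so `u.2 = 0`: `Ω_θ` is nondegenerate. Since `-dΘ_Q` is closed, Leibniz gives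
`dΩ_θ = d(θ ∧ Θ_Q) = dθ ∧ Θ_Q - θ ∧ dΘ_Q = dθ ∧ Θ_Q + θ ∧ Ω_θ`, and `dθ = π_Q*dϑ = 0`.
-/

open ContinuousLinearMap

theorem fderiv_clm_apply_const_apply {G : Type*} [NormedAddCommGroup G] [NormedSpace ℝ G]
    {ϑ : G → E →L[ℝ] ℝ} {x : G} (hϑ : DifferentiableAt ℝ ϑ x) (a : E) (u : G) :
    fderiv ℝ (fun y => ϑ y a) x u = fderiv ℝ ϑ x u a := by
  rw [fderiv_clm_apply hϑ (differentiableAt_const a)]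
  simp

theorem fderiv_apply_snd (a : E) (z u : Cot E) :
    fderiv ℝ (fun y : Cot E => y.2 a) z u = u.2 a := by
  rw [fderiv_clm_apply differentiableAt_snd (differentiableAt_const a), fderiv_snd]
  simp

theorem hasFDerivAt_apply_fst {ϑ : E → E →L[ℝ] ℝ} {ϑ' : E →L[ℝ] E →L[ℝ] ℝ} {z : Cot E}
    (hϑ : HasFDerivAt ϑ ϑ' z.1) (a : E) :
    HasFDerivAt (fun y : Cot E => ϑ y.1 a) ((ϑ' ∘L fst ℝ E (E →L[ℝ] ℝ)).flip a) z := by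
  simpa using (hϑ.comp z hasFDerivAt_fst).clm_apply (hasFDerivAt_const a z)

theorem extDer1_pullback_fst {ϑ : E → E →L[ℝ] ℝ} {z : Cot E} (hϑ : DifferentiableAt ℝ ϑ z.1)
    (u v : Cot E) :
    extDer1 (fun y w : Cot E => ϑ y.1 w.1) z u v = extDer1 (fun y w => ϑ y w) z.1 u.1 v.1 := by
  simp only [extDer1, (hasFDerivAt_apply_fst hϑ.hasFDerivAt _).fderiv,
    fderiv_clm_apply_const_apply hϑ]
  simp

theorem canSymp_apply (z u v : Cot E) : canSymp z u v = v.2 u.1 - u.2 v.1 := by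
  simp only [canSymp, extDer1, taut, fderiv_apply_snd]
  ring

theorem lcsForm_apply (ϑ : E → E →L[ℝ] ℝ) (z u v : Cot E) :
    lcsForm ϑ z u v = v.2 u.1 - u.2 v.1 + (ϑ z.1 u.1 * z.2 v.1 - ϑ z.1 v.1 * z.2 u.1) := by
  rw [lcsForm, canSymp_apply, taut, taut]

theorem lcsForm_nondegenerate (ϑ : E → E →L[ℝ] ℝ) {z u : Cot E}
    (h : ∀ v, lcsForm ϑ z u v = 0) : u = 0 := by
  have hfst : u.1 = 0 := by
    by_contra hne
    obtain ⟨ξ, hξ⟩ := SeparatingDual.exists_ne_zero (R := ℝ) hne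
    exact hξ (by simpa [lcsForm_apply] using h (0, ξ))
  have hsnd : u.2 = 0 := by
    ext w
    simpa [lcsForm_apply, hfst] using h (w, 0)
  exact Prod.ext hfst hsnd

theorem fderiv_lcsForm {ϑ : E → E →L[ℝ] ℝ} {z : Cot E} (hϑ : DifferentiableAt ℝ ϑ z.1)
    (u v w : Cot E) :
    fderiv ℝ (fun y => lcsForm ϑ y v w) z u =
      fderiv ℝ ϑ z.1 u.1 v.1 * z.2 w.1 + ϑ z.1 v.1 * u.2 w.1
        - (fderiv ℝ ϑ z.1 u.1 w.1 * z.2 v.1 + ϑ z.1 w.1 * u.2 v.1) := by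
  have hθ := hasFDerivAt_apply_fst hϑ.hasFDerivAt
  have hp (a : E) : HasFDerivAt (fun y : Cot E => y.2 a) (apply ℝ ℝ a ∘L snd ℝ E _) z :=
    (apply ℝ ℝ a ∘L snd ℝ E _).hasFDerivAt
  have h : HasFDerivAt
      (fun y : Cot E => w.2 v.1 - v.2 w.1 + (ϑ y.1 v.1 * y.2 w.1 - ϑ y.1 w.1 * y.2 v.1)) _ z :=
    (hasFDerivAt_const _ z).add (((hθ v.1).mul (hp w.1)).sub ((hθ w.1).mul (hp v.1)))
  simp only [lcsForm_apply, h.fderiv, zero_add, sub_apply, add_apply, smul_apply, comp_apply, coe_snd', apply_apply,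
    smul_eq_mul, flip_apply, coe_fst']
  ring

theorem extDer2_lcsForm {ϑ : E → E →L[ℝ] ℝ} {z : Cot E} (hϑ : DifferentiableAt ℝ ϑ z.1)
    (u v w : Cot E) :
    extDer2 (lcsForm ϑ) z u v w =
      wedge12 (fun y w : Cot E => ϑ y.1 w.1) (lcsForm ϑ) z u v w +
        wedge12 taut (extDer1 fun y w : Cot E => ϑ y.1 w.1) z u v w := by
  simp only [extDer2, fderiv_lcsForm hϑ, wedge12, extDer1_pullback_fst hϑ]
  simp only [extDer1, fderiv_clm_apply_const_apply hϑ, lcsForm_apply, taut]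
  ring

theorem cotangent_lcs_structure_general
    (ϑ : E → E →L[ℝ] ℝ) (hϑs : ContDiff ℝ (⊤ : ℕ∞) ϑ)
    (hϑc : ∀ x u v, extDer1 (fun y w => ϑ y w) x u v = 0)
    (θ : Cot E → Cot E → ℝ) (hθ : ∀ z v, θ z v = ϑ z.1 v.1) :
    (∀ z u, (∀ v, lcsForm ϑ z u v = 0) → u = 0) ∧
    (∀ z u v w, extDer2 (lcsForm ϑ) z u v w = wedge12 θ (lcsForm ϑ) z u v w) ∧
    (∀ z u v, extDer1 θ z u v = 0) := by
  have hϑ : Differentiable ℝ ϑ := hϑs.differentiable (by simp)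
  obtain rfl : θ = fun z v => ϑ z.1 v.1 := funext₂ hθ
  have hdθ (z u v : Cot E) : extDer1 (fun y w : Cot E => ϑ y.1 w.1) z u v = 0 := by
    rw [extDer1_pullback_fst (hϑ z.1), hϑc]
  refine ⟨fun z u => lcsForm_nondegenerate ϑ, fun z u v w => ?_, hdθ⟩
  rw [extDer2_lcsForm (hϑ z.1)]
  simp [wedge12, hdθ]

/-- For a closed one-form `ϑ` on `Q = E` with pullback
`θ = π_Q*ϑ` to `T*Q`, the two-form `Ω_θ = -d_θΘ_Q = -dΘ_Q + θ∧Θ_Q` is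
nondegenerate and satisfies `dΩ_θ = θ ∧ Ω_θ`, and `θ` is closed;
i.e. `(T*Q, Ω_θ, θ)` is a locally conformal symplectic manifold with
Lee form `θ`. -/
theorem cotangent_lcs_structure
    [FiniteDimensional ℝ E]
    (ϑ : E → E →L[ℝ] ℝ) (hϑs : ContDiff ℝ (⊤ : ℕ∞) ϑ)
    (hϑc : ∀ x u v, extDer1 (fun y w => ϑ y w) x u v = 0)
    (θ : Cot E → Cot E → ℝ) (hθ : ∀ z v, θ z v = ϑ z.1 v.1) :
    (∀ z u, (∀ v, lcsForm ϑ z u v = 0) → u = 0) ∧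
    (∀ z u v w, extDer2 (lcsForm ϑ) z u v w = wedge12 θ (lcsForm ϑ) z u v w) ∧
    (∀ z u v, extDer1 θ z u v = 0) :=
  cotangent_lcs_structure_general ϑ hϑs hϑc θ hθ
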